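/- Let Q be a Σ⁰₂ prefix-free set of binary strings. Then there exists an oracle Turing machine M (a monotone machine) such that for every infinite binary sequence X: M(X) is total if and only if M(X) is total and equal to 0^ω, if and only if X has no prefix in Q. -/

import Mathlib

open MeasureTheory Filter

/-- Cantor space: infinite binary sequences. -/
abbrev CSeq := ℕ → Bool
/-- Finite binary strings. -/
abbrev BStr := List Bool

/-- The prefix of `X` of length `n`. -/
def pref (X : CSeq) (n : ℕ) : BStr := (List.range n).map X

/-- The halting problem `∅'`. -/
def K0 : Set ℕ := {n | ((Denumerable.ofNat Nat.Partrec.Code n).eval n).Dom}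

/-- The characteristic sequence of the halting problem. -/
noncomputable def chiK : CSeq := fun n => @decide (n ∈ K0) (Classical.propDecidable _)

/-- `f` is Turing computable with oracle `Y`: some computable functional,
reading finite initial segments of `Y`, computes `f` (consistently). -/
def ComputableInSeq {α : Type} [Primcodable α] (Y : CSeq) (f : ℕ → α) : Prop :=
  ∃ F : ℕ → BStr → Option α, Computable₂ F ∧
    ∀ n, (∃ k, (F n (pref Y k)).isSome) ∧ ∀ k a, F n (pref Y k) = some a → a = f n

/-- A set of strings is c.e. in (computably enumerable relative to) the oracle `Y`. -/
def CEIn (Y : CSeq) (S : Set BStr) : Prop :=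
  ∃ R : BStr → BStr → Bool, Computable₂ R ∧ ∀ σ, σ ∈ S ↔ ∃ k, R σ (pref Y k) = true

/-- A set of strings is Σ⁰₂ iff it is c.e. relative to the halting problem. -/
def SigmaTwo (S : Set BStr) : Prop := CEIn chiK S

/-- A set of strings is prefix-free if no element is a proper prefix of another. -/
def PrefixFree (S : Set BStr) : Prop := ∀ σ ∈ S, ∀ τ ∈ S, σ <+: τ → σ = τ

/-- Two strings are compatible if one is a prefix of the other. -/
def Compat (σ τ : BStr) : Prop := σ <+: τ ∨ τ <+: σ

/-- `⟦S⟧`: the set of sequences with a prefix in `S`. -/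
def cyl (S : Set BStr) : Set CSeq := {X | ∃ σ ∈ S, pref X σ.length = σ}

/-- The binary digits of (the fractional part of) a real number. -/
noncomputable def realDigits (x : ℝ) : CSeq := fun i =>
  @decide ((1:ℝ)/2 ≤ Int.fract (x * 2 ^ i)) (Classical.propDecidable _)

/-- The fair-coin (Lebesgue) measure on Cantor space, obtained as the pushforward
of Lebesgue measure on `[0,1)` under the binary expansion map. -/
noncomputable def μC : Measure CSeq :=
  Measure.map realDigits (volume.restrict (Set.Ico (0:ℝ) 1))

/-- A uniformly-c.e.-in-`Y` family of sets of strings. -/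
def UniformCEIn (Y : CSeq) (V : ℕ → Set BStr) : Prop :=
  ∃ R : ℕ → BStr → BStr → Bool, Computable (fun p : ℕ × BStr × BStr => R p.1 p.2.1 p.2.2) ∧
    ∀ i σ, σ ∈ V i ↔ ∃ k, R i σ (pref Y k) = true

/-- A Martin-Löf test relative to the oracle `Y`. -/
def MLTestIn (Y : CSeq) (V : ℕ → Set BStr) : Prop :=
  UniformCEIn Y V ∧ ∀ i, μC (cyl (V i)) ≤ (1/2 : ENNReal) ^ i

/-- `X` is Martin-Löf random relative to the oracle `Y`. -/
def MLRandomIn (Y X : CSeq) : Prop := ∀ V, MLTestIn Y V → ∃ i, X ∉ cyl (V i)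

/-- Plain Martin-Löf randomness (trivial oracle). -/
def MLRandom (X : CSeq) : Prop := MLRandomIn (fun _ => false) X

/-- 2-randomness: Martin-Löf randomness relative to the halting problem. -/
def TwoRandom (X : CSeq) : Prop := MLRandomIn chiK X

/-- A real is 2-random if its binary expansion is 2-random. -/
def TwoRandomReal (x : ℝ) : Prop := TwoRandom (realDigits x)

/-- A real is `0'`-left-c.e. if it is the limit of an increasing sequence of
rationals computable from the halting problem. -/
def ZJLeftCE (x : ℝ) : Prop :=
  ∃ q : ℕ → ℚ, ComputableInSeq chiK q ∧ Monotone q ∧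
    Tendsto (fun n => (q n : ℝ)) atTop (nhds x)

/-- A real is `0'`-right-c.e. if it is the limit of a decreasing sequence of
rationals computable from the halting problem. -/
def ZJRightCE (x : ℝ) : Prop :=
  ∃ q : ℕ → ℚ, ComputableInSeq chiK q ∧ Antitone q ∧
    Tendsto (fun n => (q n : ℝ)) atTop (nhds x)

/-- A monotone oracle Turing machine. -/
structure MonotoneMachine where
  eval : BStr → Option BStr
  comp : Computable eval
  mono : ∀ σ τ a b, σ <+: τ → eval σ = some a → eval τ = some b → a <+: b

/-- The output of `M` on oracle `X` is total (infinite). -/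
def TotalOn (M : MonotoneMachine) (X : CSeq) : Prop :=
  ∀ n, ∃ k a, M.eval (pref X k) = some a ∧ n < a.length

/-- The output sequence of `M` on oracle `X` (meaningful where defined). -/
noncomputable def evalSeq (M : MonotoneMachine) (X : CSeq) : CSeq := fun n =>
  @dite _ (∃ k a, M.eval (pref X k) = some a ∧ n < a.length) (Classical.propDecidable _)
    (fun h => h.choose_spec.choose.getD n false) (fun _ => false)

/-- Turing reducibility `A ≤_T Y` between binary sequences. -/
def TuringLE (A Y : CSeq) : Prop := ComputableInSeq Y A

/-! ### Auxiliary construction for Statement 8 -/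

namespace Stmt8

open Nat.Partrec (Code)
open Nat.Partrec.Code

/-- A computable enumeration of the halting problem `K0`, in which every value
occurs only finitely often. -/
def aFn (s : ℕ) : ℕ :=
  if (evaln (s.unpair.2 + 1) (Denumerable.ofNat Code s.unpair.1) s.unpair.1).isSome
      && !(evaln s.unpair.2 (Denumerable.ofNat Code s.unpair.1) s.unpair.1).isSome
  then s.unpair.1 else Encodable.encode (Code.const s)

/-- Stage-`t` approximation to `chiK`. -/
def chiApp (t n : ℕ) : Bool := (List.range (t + 1)).any fun r => aFn r == n

/-- Stage-`t` approximation to `pref chiK k`. -/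
def prefA (t k : ℕ) : BStr := (List.range k).map fun n => chiApp t n

/-- `okk s t k`: the value `k` is below `aFn r` for every `r ∈ [t, s]`. -/
def okk (s t k : ℕ) : Bool :=
  (List.range (s + 1)).all fun r => decide (r < t) || decide (k ≤ aFn r)

variable (R : BStr → BStr → Bool)

/-- Stage-`s` approximation to the Σ⁰₂ set `Q`. -/
def QA (s : ℕ) (σ : BStr) : Bool :=
  (List.range (s + 1)).any fun t => (List.range (aFn t + 1)).any fun k =>
    okk s t k && R σ (prefA t k)

/-- `DD s τ`: no prefix of `τ` is in the stage-`s` approximation of `Q`. -/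
def DD (s : ℕ) (τ : BStr) : Bool :=
  (List.range (τ.length + 1)).all fun i => !(QA R s (τ.take i))

/-- `gd σ m`: the length-`m` prefix of `σ` is certified by stage `|σ|`. -/
def gd (σ : BStr) (m : ℕ) : Bool :=
  (List.range (σ.length + 1)).any fun s => decide (m ≤ s) && DD R s (σ.take m)

/-- Output length of the machine on input `σ`. -/
def g (σ : BStr) : ℕ :=
  (List.range (σ.length + 1)).foldr (fun m acc => if gd R σ m then max m acc else acc) 0

/-- The machine. -/
def evalM (σ : BStr) : Option BStr := some (List.replicate (g R σ) false)

/-! ### Basic membership characterizations -/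

theorem chiK_iff {n : ℕ} : chiK n = true ↔ n ∈ K0 := by
  simp [chiK]

theorem mem_K0_iff {n : ℕ} : n ∈ K0 ↔ ∃ s, aFn s = n := by
  constructor
  · intro h
    obtain ⟨x, hx⟩ := Part.dom_iff_mem.1 h
    obtain ⟨k, hk⟩ := evaln_complete.1 hx
    have hex : ∃ k, (evaln k (Denumerable.ofNat Code n) n).isSome := by
      exact ⟨k, by rw [Option.isSome_iff_exists]; exact ⟨x, hk⟩⟩
    classical
    have hk₀s := Nat.find_spec hex
    cases hfind : Nat.find hex with
    | zero =>
      rw [hfind] at hk₀s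
      simp [evaln] at hk₀s
    | succ t =>
      rw [hfind] at hk₀s
      have hnone : ¬(evaln t (Denumerable.ofNat Code n) n).isSome = true :=
        Nat.find_min hex (by omega)
      refine ⟨Nat.pair n t, ?_⟩
      simp only [aFn, Nat.unpair_pair]
      rw [if_pos]
      simp [hk₀s, hnone]
  · rintro ⟨s, rfl⟩
    unfold aFn
    split
    · next hcond =>
      simp only [Bool.and_eq_true, Option.isSome_iff_exists] at hcond
      obtain ⟨⟨x, hx⟩, -⟩ := hcond
      have : x ∈ (Denumerable.ofNat Code s.unpair.1).eval s.unpair.1 :=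
        evaln_sound (by exact hx)
      exact Part.dom_iff_mem.2 ⟨x, this⟩
    · show ((Denumerable.ofNat Code _).eval _).Dom
      rw [Denumerable.ofNat_encode]
      simp [eval_const]

/-- Each value occurs finitely often in the enumeration. -/
theorem aFn_finite (v : ℕ) : {s | aFn s = v}.Finite := by
  classical
  have hsub : {s | aFn s = v} ⊆
      {s | s = Nat.pair v s.unpair.2 ∧
        (evaln (s.unpair.2 + 1) (Denumerable.ofNat Code v) v).isSome = true ∧
        (evaln s.unpair.2 (Denumerable.ofNat Code v) v).isSome = false}
      ∪ {s | Encodable.encode (Code.const s) = v} := by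
    intro s hs
    simp only [Set.mem_setOf_eq] at hs
    unfold aFn at hs
    split at hs
    · next hcond =>
      subst hs
      simp only [Bool.and_eq_true, Bool.not_eq_true'] at hcond
      left
      exact ⟨(Nat.pair_unpair s).symm, hcond.1, hcond.2⟩
    · right; exact hs
  refine Set.Finite.subset (Set.Finite.union ?_ ?_) hsub
  · apply Set.Subsingleton.finite
    rintro s₁ ⟨hs₁, h1s, h1n⟩ s₂ ⟨hs₂, h2s, h2n⟩
    have ht : s₁.unpair.2 = s₂.unpair.2 := by
      by_contra hne
      rcases Nat.lt_or_ge s₁.unpair.2 s₂.unpair.2 with h | h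
      · obtain ⟨x, hx⟩ := Option.isSome_iff_exists.1 h1s
        have hmem : x ∈ evaln s₂.unpair.2 (Denumerable.ofNat Code v) v :=
          evaln_mono h (by exact hx)
        have h2n' : evaln s₂.unpair.2 (Denumerable.ofNat Code v) v = none :=
          Option.not_isSome_iff_eq_none.1 (by simp [h2n])
        rw [h2n'] at hmem
        simp at hmem
      · have h' : s₂.unpair.2 + 1 ≤ s₁.unpair.2 := by omega
        obtain ⟨x, hx⟩ := Option.isSome_iff_exists.1 h2s
        have hmem : x ∈ evaln s₁.unpair.2 (Denumerable.ofNat Code v) v :=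
          evaln_mono h' (by exact hx)
        have h1n' : evaln s₁.unpair.2 (Denumerable.ofNat Code v) v = none :=
          Option.not_isSome_iff_eq_none.1 (by simp [h1n])
        rw [h1n'] at hmem
        simp at hmem
    rw [hs₁, hs₂, ht]
  · apply Set.Subsingleton.finite
    rintro s₁ hs₁ s₂ hs₂
    simp only [Set.mem_setOf_eq] at hs₁ hs₂
    exact const_inj (Encodable.encode_injective (hs₁.trans hs₂.symm))

/-- Eventually all enumerated values are at least `k`. -/
theorem aFn_eventually_ge (k : ℕ) : ∃ B, ∀ s, B ≤ s → k ≤ aFn s := by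
  have hfin : {s | aFn s < k}.Finite := by
    have : {s | aFn s < k} ⊆ ⋃ v ∈ Finset.range k, {s | aFn s = v} := by
      intro s hs
      simp only [Set.mem_setOf_eq] at hs
      simp only [Set.mem_iUnion, Finset.mem_range]
      exact ⟨aFn s, hs, rfl⟩
    exact Set.Finite.subset (Set.Finite.biUnion (Finset.range k).finite_toSet
      (fun v _ => aFn_finite v)) this
  obtain ⟨B₀, hB₀⟩ := hfin.bddAbove
  refine ⟨B₀ + 1, fun s hs => ?_⟩
  by_contra hlt
  have : s ≤ B₀ := hB₀ (by simp only [Set.mem_setOf_eq]; omega)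
  omega

/-- There are arbitrarily large true stages. -/
theorem true_stages (s₀ : ℕ) : ∃ s, s₀ ≤ s ∧ ∀ r, s < r → aFn s < aFn r := by
  classical
  have hne : (Set.range fun r : {r // s₀ ≤ r} => aFn r).Nonempty := ⟨aFn s₀, ⟨s₀, le_refl _⟩, rfl⟩
  set v := sInf (Set.range fun r : {r // s₀ ≤ r} => aFn r) with hv
  have hvmem := Nat.sInf_mem hne
  obtain ⟨⟨r₀, hr₀⟩, hr₀v⟩ := hvmem
  have hOfin : {r | s₀ ≤ r ∧ aFn r = v}.Finite :=
    Set.Finite.subset (aFn_finite v) (fun r hr => hr.2)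
  have hOne : {r | s₀ ≤ r ∧ aFn r = v}.Nonempty := ⟨r₀, hr₀, hr₀v⟩
  obtain ⟨s, hsmem, hsmax⟩ := Set.Finite.exists_maximalFor id _ hOfin hOne
  refine ⟨s, hsmem.1, fun r hr => ?_⟩
  have hrge : v ≤ aFn r := Nat.sInf_le ⟨⟨r, le_trans hsmem.1 (le_of_lt hr)⟩, rfl⟩
  rcases Nat.lt_or_ge v (aFn r) with h | h
  · rw [hsmem.2]; exact h
  · exfalso
    have : aFn r = v := le_antisymm h hrge
    have := hsmax (j := r) ⟨le_trans hsmem.1 (le_of_lt hr), this⟩ (le_of_lt hr)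
    simp only [id] at this
    omega

/-- For each `k` there is a stage by which all `n < k` in `K0` are enumerated. -/
theorem settle_exists (k : ℕ) : ∃ t, ∀ n, n < k → n ∈ K0 → ∃ r, r ≤ t ∧ aFn r = n := by
  induction k with
  | zero => exact ⟨0, fun n hn => by omega⟩
  | succ k ih =>
    obtain ⟨t, ht⟩ := ih
    by_cases hk : k ∈ K0
    · obtain ⟨r, hr⟩ := mem_K0_iff.1 hk
      refine ⟨max t r, fun n hn hnK => ?_⟩
      rcases Nat.lt_or_ge n k with h | h
      · obtain ⟨r', hr', hr''⟩ := ht n h hnK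
        exact ⟨r', le_trans hr' (le_max_left _ _), hr''⟩
      · have : n = k := by omega
        subst this
        exact ⟨r, le_max_right _ _, hr⟩
    · refine ⟨t, fun n hn hnK => ?_⟩
      rcases Nat.lt_or_ge n k with h | h
      · exact ht n h hnK
      · have : n = k := by omega
        subst this
        exact absurd hnK hk

theorem chiApp_iff {t n : ℕ} : chiApp t n = true ↔ ∃ r, r ≤ t ∧ aFn r = n := by
  simp [chiApp, Nat.lt_succ_iff]

/-- If all `n < k` in `K0` are enumerated by `t`, then `prefA t k = pref chiK k`. -/
theorem prefA_eq {t k : ℕ} (h : ∀ n, n < k → n ∈ K0 → ∃ r, r ≤ t ∧ aFn r = n) :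
    prefA t k = pref chiK k := by
  unfold prefA pref
  apply List.map_congr_left
  intro n hn
  rw [List.mem_range] at hn
  by_cases hK : n ∈ K0
  · rw [chiApp_iff.2 (h n hn hK), (chiK_iff.2 hK)]
  · have h1 : chiApp t n = false := by
      rw [Bool.eq_false_iff]
      intro hc
      obtain ⟨r, _, hr⟩ := chiApp_iff.1 hc
      exact hK (mem_K0_iff.2 ⟨r, hr⟩)
    have h2 : chiK n = false := by
      rw [Bool.eq_false_iff]
      intro hc
      exact hK (chiK_iff.1 hc)
    rw [h1, h2]

/-- The propositional form of `QA`. -/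
def QAp (s : ℕ) (σ : BStr) : Prop :=
  ∃ t, t ≤ s ∧ ∃ k, (∀ r, t ≤ r → r ≤ s → k ≤ aFn r) ∧ R σ (prefA t k) = true

theorem QA_iff {s : ℕ} {σ : BStr} : QA R s σ = true ↔ QAp R s σ := by
  unfold QA QAp
  simp only [List.any_eq_true, List.mem_range, Nat.lt_succ_iff, Bool.and_eq_true,
    okk, List.all_eq_true, Bool.or_eq_true, decide_eq_true_eq]
  constructor
  · rintro ⟨t, hts, k, -, hok, hR⟩
    refine ⟨t, hts, k, fun r htr hrs => ?_, hR⟩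
    rcases hok r hrs with h | h
    · omega
    · exact h
  · rintro ⟨t, hts, k, hok, hR⟩
    refine ⟨t, hts, k, hok t (le_refl t) hts, fun r hrs => ?_, hR⟩
    rcases Nat.lt_or_ge r t with h | h
    · left; exact h
    · right; exact hok r h hrs

section Qset

variable {Q : Set BStr}

/-- (A): members of `Q` are eventually permanently in the approximation. -/
theorem inQ_eventually (hmem : ∀ σ, σ ∈ Q ↔ ∃ k, R σ (pref chiK k) = true)
    {σ : BStr} (hσ : σ ∈ Q) :
    ∃ t₀, ∀ s, t₀ ≤ s → QAp R s σ := by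
  obtain ⟨k, hk⟩ := (hmem σ).1 hσ
  obtain ⟨B, hB⟩ := aFn_eventually_ge k
  obtain ⟨t₁, ht₁⟩ := settle_exists k
  set t₀ := max B t₁ with ht₀
  have hset : ∀ n, n < k → n ∈ K0 → ∃ r, r ≤ t₀ ∧ aFn r = n := fun n hn hnK => by
    obtain ⟨r, hr, hr'⟩ := ht₁ n hn hnK
    exact ⟨r, le_trans hr (le_max_right _ _), hr'⟩
  refine ⟨t₀, fun s hs => ⟨t₀, hs, k, fun r hr _ => ?_, ?_⟩⟩
  · exact hB r (le_trans (le_max_left _ _) hr)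
  · rw [prefA_eq hset]; exact hk

/-- (B): at a true stage, the approximation has no false positives. -/
theorem trueStage_sound (hmem : ∀ σ, σ ∈ Q ↔ ∃ k, R σ (pref chiK k) = true) {s : ℕ} {σ : BStr}
    (hts : ∀ r, s < r → aFn s < aFn r) (h : QAp R s σ) : σ ∈ Q := by
  obtain ⟨t, hts', k, hok, hR⟩ := h
  have hset : ∀ n, n < k → n ∈ K0 → ∃ r, r ≤ t ∧ aFn r = n := by
    intro n hn hnK
    obtain ⟨r, hr⟩ := mem_K0_iff.1 hnK
    refine ⟨r, ?_, hr⟩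
    by_contra hrt
    push_neg at hrt
    rcases Nat.lt_or_ge s r with h1 | h1
    · have h2 := hts r h1
      have h3 := hok s hts' (le_refl s)
      omega
    · have := hok r (by omega) h1
      omega
  rw [prefA_eq hset] at hR
  exact (hmem σ).2 ⟨k, hR⟩

end Qset

theorem DD_iff {s : ℕ} {τ : BStr} :
    DD R s τ = true ↔ ∀ i, i ≤ τ.length → QA R s (τ.take i) = false := by
  unfold DD
  simp [List.all_eq_true, Nat.lt_succ_iff]

theorem gd_iff {σ : BStr} {m : ℕ} :
    gd R σ m = true ↔ ∃ s, m ≤ s ∧ s ≤ σ.length ∧ DD R s (σ.take m) = true := by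
  unfold gd
  simp only [List.any_eq_true, List.mem_range, Nat.lt_succ_iff, Bool.and_eq_true,
    decide_eq_true_eq]
  tauto

/-- Specification of the fold used in `g`. -/
theorem foldr_max_spec (p : ℕ → Bool) (L : List ℕ) :
    (∀ i ∈ L, p i = true → i ≤ L.foldr (fun i acc => if p i then max i acc else acc) 0) ∧
    (L.foldr (fun i acc => if p i then max i acc else acc) 0 = 0 ∨
      (L.foldr (fun i acc => if p i then max i acc else acc) 0 ∈ L ∧
        p (L.foldr (fun i acc => if p i then max i acc else acc) 0) = true)) := by
  induction L with
  | nil => simp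
  | cons a L ih =>
    obtain ⟨ih1, ih2⟩ := ih
    constructor
    · intro i hi hpi
      simp only [List.foldr_cons]
      rcases List.mem_cons.1 hi with rfl | hi
      · rw [if_pos hpi]; exact le_max_left _ _
      · split
        · exact le_trans (ih1 i hi hpi) (le_max_right _ _)
        · exact ih1 i hi hpi
    · simp only [List.foldr_cons]
      split
      · next hpa =>
        rcases ih2 with h | ⟨hmem', hp'⟩
        · rw [h]
          simp only [Nat.max_zero]
          right; exact ⟨List.mem_cons_self, hpa⟩
        · rcases Nat.le_total (L.foldr (fun i acc => if p i then max i acc else acc) 0) a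
            with h | h
          · rw [max_eq_left h]; right; exact ⟨List.mem_cons_self, hpa⟩
          · rw [max_eq_right h]; right; exact ⟨List.mem_cons_of_mem _ hmem', hp'⟩
      · rcases ih2 with h | ⟨hmem', hp'⟩
        · left; exact h
        · right; exact ⟨List.mem_cons_of_mem _ hmem', hp'⟩

theorem le_g {σ : BStr} {m : ℕ} (hm : m ≤ σ.length) (h : gd R σ m = true) : m ≤ g R σ := by
  have := (foldr_max_spec (gd R σ) (List.range (σ.length + 1))).1 m
    (List.mem_range.2 (Nat.lt_succ_of_le hm)) h
  exact this

theorem g_spec {σ : BStr} : g R σ = 0 ∨ (g R σ ≤ σ.length ∧ gd R σ (g R σ) = true) := by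
  rcases (foldr_max_spec (gd R σ) (List.range (σ.length + 1))).2 with h | ⟨hmem', hp⟩
  · left; exact h
  · right; exact ⟨Nat.lt_succ_iff.1 (List.mem_range.1 hmem'), hp⟩

/-! ### Facts about `pref` -/

theorem pref_length (X : CSeq) (k : ℕ) : (pref X k).length = k := by
  simp [pref]

theorem pref_take (X : CSeq) {m k : ℕ} (h : m ≤ k) : (pref X k).take m = pref X m := by
  unfold pref
  rw [← List.map_take, List.take_range]
  rw [min_eq_left h]

/-! ### Monotonicity of the machine -/

theorem take_eq_of_prefix {σ τ : BStr} (h : σ <+: τ) {m : ℕ} (hm : m ≤ σ.length) :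
    τ.take m = σ.take m := by
  obtain ⟨u, rfl⟩ := h
  rw [List.take_append]
  have : m - σ.length = 0 := by omega
  rw [this]
  simp

theorem g_mono {σ τ : BStr} (h : σ <+: τ) : g R σ ≤ g R τ := by
  rcases g_spec R (σ := σ) with h0 | ⟨hle, hgd⟩
  · omega
  · apply le_g R (le_trans hle h.length_le)
    rw [gd_iff] at hgd ⊢
    obtain ⟨s, hms, hsl, hDD⟩ := hgd
    refine ⟨s, hms, le_trans hsl h.length_le, ?_⟩
    rwa [take_eq_of_prefix h hle]

theorem evalM_mono : ∀ σ τ a b, σ <+: τ → evalM R σ = some a → evalM R τ = some b →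
    a <+: b := by
  intro σ τ a b hpre ha hb
  simp only [evalM, Option.some_inj] at ha hb
  subst ha; subst hb
  refine ⟨List.replicate (g R τ - g R σ) false, ?_⟩
  rw [← List.replicate_add]
  congr 1
  have := g_mono R hpre
  omega

end Stmt8
namespace Stmt8

open Nat.Partrec (Code)
open Nat.Partrec.Code

/-! ### Computability -/

/-- Mapping a computable function over a computably-generated list. -/
theorem comp_list_map {α β σ : Type} [Primcodable α] [Primcodable β] [Primcodable σ]
    [Inhabited β] {f : α → List β} {g : α → β → σ}
    (hf : Computable f) (hg : Computable₂ g) :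
    Computable fun a => (f a).map (g a) := by
  have hrec : Computable fun a =>
      Nat.rec (motive := fun _ => List σ) []
        (fun y IH => IH ++ [g a ((f a).getD y default)]) ((f a).length) := by
    exact Computable.nat_rec (Computable.list_length.comp hf) (Computable.const [])
      ((Computable.list_concat.comp (Computable.snd.comp Computable.snd)
        (hg.comp Computable.fst
          (((Primrec.list_getD (default : β)).to_comp).comp (hf.comp Computable.fst)
            (Computable.fst.comp Computable.snd)))).to₂)
  refine hrec.of_eq fun a => ?_
  have key : ∀ n, n ≤ (f a).length →
      Nat.rec (motive := fun _ => List σ) []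
        (fun y IH => IH ++ [g a ((f a).getD y default)]) n = ((f a).take n).map (g a) := by
    intro n
    induction n with
    | zero => simp
    | succ k ih =>
      intro h
      have hk : k < (f a).length := h
      have hkd : (f a).getD k default = (f a)[k] := List.getD_eq_getElem _ _ hk
      show Nat.rec (motive := fun _ => List σ) []
          (fun y IH => IH ++ [g a ((f a).getD y default)]) k
            ++ [g a ((f a).getD k default)] = _
      rw [ih (le_of_lt hk), hkd, List.map_take]
      have := List.take_concat_get' ((f a).map (g a)) k (by simpa using hk)
      simpa using this
  rw [key (f a).length (le_refl _), List.take_length]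

theorem aFn_prim : Primrec aFn := by
  have h1 : Primrec fun s : ℕ => s.unpair.1 := Primrec.fst.comp Primrec.unpair
  have h2 : Primrec fun s : ℕ => s.unpair.2 := Primrec.snd.comp Primrec.unpair
  have hc : Primrec fun s : ℕ => Denumerable.ofNat Code s.unpair.1 :=
    (Primrec.ofNat Code).comp h1
  have he1 : Primrec fun s : ℕ =>
      evaln (s.unpair.2 + 1) (Denumerable.ofNat Code s.unpair.1) s.unpair.1 :=
    primrec_evaln.comp (((Primrec.succ.comp h2).pair hc).pair h1)
  have he2 : Primrec fun s : ℕ =>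
      evaln s.unpair.2 (Denumerable.ofNat Code s.unpair.1) s.unpair.1 :=
    primrec_evaln.comp ((h2.pair hc).pair h1)
  have hb : Primrec fun s : ℕ =>
      ((evaln (s.unpair.2 + 1) (Denumerable.ofNat Code s.unpair.1) s.unpair.1).isSome
        && !(evaln s.unpair.2 (Denumerable.ofNat Code s.unpair.1) s.unpair.1).isSome) :=
    Primrec.and.comp (Primrec.option_isSome.comp he1)
      (Primrec.not.comp (Primrec.option_isSome.comp he2))
  have hd : Primrec fun s : ℕ => Encodable.encode (Code.const s) :=
    Primrec.encode.comp (primrec_const.comp Primrec.id)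
  unfold aFn
  exact Primrec.ite (Primrec.eq.comp hb (Primrec.const true)) h1 hd

/-- `anyId l = l.any id`. -/
def anyId (l : List Bool) : Bool := l.any id

/-- `allId l = l.all id`. -/
def allId (l : List Bool) : Bool := l.all id

theorem anyId_prim : Primrec anyId := by
  have : Primrec fun l : List Bool => l.foldr (fun b acc => b || acc) false :=
    Primrec.list_foldr Primrec.id (Primrec.const false)
      ((Primrec.or.comp (Primrec.fst.comp Primrec.snd)
        (Primrec.snd.comp Primrec.snd)).to₂)
  refine this.of_eq fun l => ?_
  induction l with
  | nil => rfl
  | cons a l ih => simp [anyId, List.any_cons, ih]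

theorem allId_prim : Primrec allId := by
  have : Primrec fun l : List Bool => l.foldr (fun b acc => b && acc) true :=
    Primrec.list_foldr Primrec.id (Primrec.const true)
      ((Primrec.and.comp (Primrec.fst.comp Primrec.snd)
        (Primrec.snd.comp Primrec.snd)).to₂)
  refine this.of_eq fun l => ?_
  induction l with
  | nil => rfl
  | cons a l ih => simp [allId, List.all_cons, ih]

theorem any_map' {α β : Type} (l : List α) (f : α → β) (p : β → Bool) :
    (l.map f).any p = l.any fun x => p (f x) := by
  induction l with
  | nil => rfl
  | cons a l ih => simp [List.any_cons, ih]

theorem all_map' {α β : Type} (l : List α) (f : α → β) (p : β → Bool) :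
    (l.map f).all p = l.all fun x => p (f x) := by
  induction l with
  | nil => rfl
  | cons a l ih => simp [List.all_cons, ih]

theorem anyId_map {α : Type} (l : List α) (p : α → Bool) : anyId (l.map p) = l.any p := by
  simp only [anyId, any_map', id]

theorem allId_map {α : Type} (l : List α) (p : α → Bool) : allId (l.map p) = l.all p := by
  simp only [allId, all_map', id]

theorem chiApp_prim : Primrec₂ chiApp := by
  have hg : Primrec₂ fun (p : ℕ × ℕ) (r : ℕ) => aFn r == p.2 :=
    (Primrec.beq.comp (aFn_prim.comp Primrec.snd)
      (Primrec.snd.comp Primrec.fst)).to₂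
  have hmap : Primrec fun p : ℕ × ℕ =>
      ((List.range (p.1 + 1)).map fun r => aFn r == p.2) :=
    Primrec.list_map (Primrec.list_range.comp (Primrec.succ.comp Primrec.fst)) hg
  exact ((anyId_prim.comp hmap).of_eq fun p => by
    rw [anyId_map]).to₂

theorem prefA_prim : Primrec₂ prefA := by
  have hg : Primrec₂ fun (p : ℕ × ℕ) (n : ℕ) => chiApp p.1 n :=
    (chiApp_prim.comp (Primrec.fst.comp Primrec.fst) Primrec.snd).to₂
  exact (Primrec.list_map (Primrec.list_range.comp Primrec.snd) hg).to₂

theorem okk_prim : Primrec fun p : ℕ × ℕ × ℕ => okk p.1 p.2.1 p.2.2 := by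
  have hg : Primrec₂ fun (p : ℕ × ℕ × ℕ) (r : ℕ) =>
      (decide (r < p.2.1) || decide (p.2.2 ≤ aFn r)) :=
    (Primrec.or.comp
      (Primrec.nat_lt.comp Primrec.snd (Primrec.fst.comp (Primrec.snd.comp Primrec.fst))).decide
      (Primrec.nat_le.comp (Primrec.snd.comp (Primrec.snd.comp Primrec.fst))
        (aFn_prim.comp Primrec.snd)).decide).to₂
  have hmap : Primrec fun p : ℕ × ℕ × ℕ =>
      ((List.range (p.1 + 1)).map fun r => decide (r < p.2.1) || decide (p.2.2 ≤ aFn r)) :=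
    Primrec.list_map (Primrec.list_range.comp (Primrec.succ.comp Primrec.fst)) hg
  exact (allId_prim.comp hmap).of_eq fun p => by rw [allId_map]; rfl

/-- List of candidate pairs `(t, k)` used in `QA`. -/
def pairsL (s : ℕ) : List (ℕ × ℕ) :=
  (List.range (s + 1)).flatMap fun t => (List.range (aFn t + 1)).map fun k => (t, k)

theorem pairsL_prim : Primrec pairsL := by
  have hg : Primrec₂ fun (s t : ℕ) => (List.range (aFn t + 1)).map fun k => (t, k) := by
    have : Primrec₂ fun (q : ℕ × ℕ) (k : ℕ) => (q.2, k) :=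
      ((Primrec.snd.comp Primrec.fst).pair Primrec.snd).to₂
    exact (Primrec.list_map
      (Primrec.list_range.comp (Primrec.succ.comp (aFn_prim.comp Primrec.snd))) this).to₂
  exact Primrec.list_flatMap (Primrec.list_range.comp Primrec.succ) hg

variable (R : BStr → BStr → Bool)

theorem QA_restruct (s : ℕ) (σ : BStr) :
    QA R s σ = anyId ((pairsL s).map fun p => okk s p.1 p.2 && R σ (prefA p.1 p.2)) := by
  rw [anyId_map, pairsL, QA]
  induction (List.range (s + 1)) with
  | nil => rfl
  | cons t L ih =>
    simp only [List.flatMap_cons, List.any_append, List.any_cons, any_map']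
    rw [ih]

theorem DD_restruct (s : ℕ) (τ : BStr) :
    DD R s τ = allId ((List.range (τ.length + 1)).map fun i => !(QA R s (τ.take i))) := by
  rw [allId_map, DD]

theorem gd_restruct (σ : BStr) (m : ℕ) :
    gd R σ m = anyId ((List.range (σ.length + 1)).map fun s =>
      decide (m ≤ s) && DD R s (σ.take m)) := by
  rw [anyId_map, gd]

/-- Primitive-recursive "largest certified index" extractor. -/
def H (l : List Bool) : ℕ :=
  (List.range l.length).foldr (fun i acc => if l.getD i false = true then max i acc else acc) 0

theorem g_restruct (σ : BStr) :
    g R σ = H ((List.range (σ.length + 1)).map fun m => gd R σ m) := by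
  unfold g H
  have hlen : ((List.range (σ.length + 1)).map fun m => gd R σ m).length = σ.length + 1 := by
    simp
  rw [hlen]
  apply List.foldr_ext
  intro a ha b
  rw [List.mem_range] at ha
  have : ((List.range (σ.length + 1)).map fun m => gd R σ m).getD a false = gd R σ a := by
    rw [List.getD_eq_getElem _ _ (by simpa using ha)]
    simp
  rw [this]

theorem H_prim : Primrec H := by
  have hstep : Primrec₂ fun (l : List Bool) (p : ℕ × ℕ) =>
      if l.getD p.1 false = true then max p.1 p.2 else p.2 := by
    have hc : PrimrecPred fun q : List Bool × ℕ × ℕ => q.1.getD q.2.1 false = true :=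
      Primrec.eq.comp ((Primrec.list_getD false).comp Primrec.fst
        (Primrec.fst.comp Primrec.snd)) (Primrec.const true)
    exact (Primrec.ite hc
      (Primrec.nat_max.comp (Primrec.fst.comp Primrec.snd) (Primrec.snd.comp Primrec.snd))
      (Primrec.snd.comp Primrec.snd)).to₂
  exact Primrec.list_foldr (Primrec.list_range.comp Primrec.list_length)
    (Primrec.const 0) hstep

attribute [irreducible] aFn okk chiApp prefA QA DD gd pairsL

theorem QA_computable (hR : Computable₂ R) : Computable₂ (QA R) := by
  have hokk : Computable fun q : (ℕ × BStr) × ℕ × ℕ => okk q.1.1 q.2.1 q.2.2 :=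
    okk_prim.to_comp.comp ((Computable.fst.comp Computable.fst).pair
      ((Computable.fst.comp Computable.snd).pair (Computable.snd.comp Computable.snd)))
  have hrr : Computable fun q : (ℕ × BStr) × ℕ × ℕ => R q.1.2 (prefA q.2.1 q.2.2) :=
    hR.comp (Computable.snd.comp Computable.fst)
      (prefA_prim.to_comp.comp (Computable.fst.comp Computable.snd)
        (Computable.snd.comp Computable.snd))
  have hg : Computable₂ fun (a : ℕ × BStr) (p : ℕ × ℕ) =>
      (okk a.1 p.1 p.2 && R a.2 (prefA p.1 p.2)) := by
    have h2 : Computable fun q : (ℕ × BStr) × ℕ × ℕ =>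
        (okk q.1.1 q.2.1 q.2.2 && R q.1.2 (prefA q.2.1 q.2.2)) := by
      have hcnd := Computable.cond hokk hrr (Computable.const false)
      refine hcnd.of_eq fun q => ?_
      cases okk q.1.1 q.2.1 q.2.2 <;> rfl
    exact h2.to₂
  have := anyId_prim.to_comp.comp
    (comp_list_map (pairsL_prim.to_comp.comp Computable.fst) hg)
  exact (this.of_eq fun a => (QA_restruct R a.1 a.2).symm).to₂

theorem take_eq {α : Type} [Inhabited α] (l : List α) (i : ℕ) :
    l.take i = (List.range (min i l.length)).map fun j => l.getD j default := by
  apply List.ext_getElem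
  · simp
  · intro n h1 h2
    simp only [List.getElem_map, List.getElem_range]
    rw [List.getElem_take]
    have hn : n < l.length := by simp at h1; omega
    rw [List.getD_eq_getElem _ _ hn]

theorem take_prim : Primrec₂ fun (l : BStr) (i : ℕ) => l.take i := by
  have hg : Primrec₂ fun (p : BStr × ℕ) (j : ℕ) => p.1.getD j false :=
    ((Primrec.list_getD false).comp (Primrec.fst.comp Primrec.fst) Primrec.snd).to₂
  have hrange : Primrec fun p : BStr × ℕ => List.range (min p.2 p.1.length) :=
    Primrec.list_range.comp (Primrec.nat_min.comp Primrec.snd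
      (Primrec.list_length.comp Primrec.fst))
  exact ((Primrec.list_map hrange hg).of_eq fun p => (take_eq p.1 p.2).symm).to₂

theorem DD_computable (hR : Computable₂ R) : Computable₂ (DD R) := by
  have hQA := QA_computable R hR
  have hg : Computable₂ fun (a : ℕ × BStr) (i : ℕ) => !(QA R a.1 (a.2.take i)) := by
    have h2 : Computable fun q : (ℕ × BStr) × ℕ => QA R q.1.1 (q.1.2.take q.2) :=
      hQA.comp (Computable.fst.comp Computable.fst)
        (take_prim.to_comp.comp (Computable.snd.comp Computable.fst) Computable.snd)
    have h3 := Computable.cond h2 (Computable.const false) (Computable.const true)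
    have h4 : Computable fun q : (ℕ × BStr) × ℕ => !(QA R q.1.1 (q.1.2.take q.2)) := by
      refine h3.of_eq fun q => ?_
      cases QA R q.1.1 (q.1.2.take q.2) <;> rfl
    exact h4.to₂
  have hmap := comp_list_map (f := fun a : ℕ × BStr => List.range (a.2.length + 1))
    ((Primrec.list_range.comp
      (Primrec.succ.comp (Primrec.list_length.comp Primrec.snd))).to_comp) hg
  have := allId_prim.to_comp.comp hmap
  exact (this.of_eq fun a => (DD_restruct R a.1 a.2).symm).to₂

theorem gd_computable (hR : Computable₂ R) : Computable₂ (gd R) := by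
  have hDD := DD_computable R hR
  have hg : Computable₂ fun (a : BStr × ℕ) (s : ℕ) =>
      (decide (a.2 ≤ s) && DD R s (a.1.take a.2)) := by
    have h1 : Computable fun q : (BStr × ℕ) × ℕ => decide (q.1.2 ≤ q.2) :=
      (Primrec.nat_le.comp (Primrec.snd.comp Primrec.fst) Primrec.snd).decide.to_comp
    have h2 : Computable fun q : (BStr × ℕ) × ℕ => DD R q.2 (q.1.1.take q.1.2) :=
      hDD.comp Computable.snd (take_prim.to_comp.comp
        (Computable.fst.comp Computable.fst) (Computable.snd.comp Computable.fst))
    have h3 := Computable.cond h1 h2 (Computable.const false)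
    have h4 : Computable fun q : (BStr × ℕ) × ℕ =>
        (decide (q.1.2 ≤ q.2) && DD R q.2 (q.1.1.take q.1.2)) := by
      refine h3.of_eq fun q => ?_
      cases hq : decide (q.1.2 ≤ q.2) <;> rfl
    exact h4.to₂
  have hmap := comp_list_map (f := fun a : BStr × ℕ => List.range (a.1.length + 1))
    ((Primrec.list_range.comp
      (Primrec.succ.comp (Primrec.list_length.comp Primrec.fst))).to_comp) hg
  have := anyId_prim.to_comp.comp hmap
  exact (this.of_eq fun a => (gd_restruct R a.1 a.2).symm).to₂

theorem g_computable (hR : Computable₂ R) : Computable (g R) := by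
  have hmap := comp_list_map (f := fun σ : BStr => List.range (σ.length + 1))
    ((Primrec.list_range.comp (Primrec.succ.comp Primrec.list_length)).to_comp)
    (gd_computable R hR)
  have := H_prim.to_comp.comp hmap
  exact this.of_eq fun σ => (g_restruct R σ).symm

theorem replicate_false_prim : Primrec fun n => List.replicate n false := by
  have := Primrec.list_map Primrec.list_range
    ((Primrec.const false).comp Primrec.fst).to₂
  refine this.of_eq fun n => ?_
  rw [List.map_const']
  simp

theorem evalM_computable (hR : Computable₂ R) : Computable (evalM R) := by
  have := Computable.option_some.comp
    ((replicate_false_prim.to_comp).comp (g_computable R hR))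
  exact this.of_eq fun σ => rfl

/-! ### Characterization of totality -/

theorem totalOn_iff (M : MonotoneMachine) (hM : M.eval = evalM R) (X : CSeq) :
    TotalOn M X ↔ ∀ m, ∃ s, m ≤ s ∧ DD R s (pref X m) = true := by
  constructor
  · intro h m
    obtain ⟨k, a, ha, hlen⟩ := h m
    rw [hM] at ha
    simp only [evalM, Option.some_inj] at ha
    rw [← ha] at hlen
    simp only [List.length_replicate] at hlen
    rcases g_spec R (σ := pref X k) with h0 | ⟨hle, hgd⟩
    · omega
    · set m' := g R (pref X k) with hm'
      obtain ⟨s, hms', hsl, hDD⟩ := (gd_iff R).1 hgd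
      rw [pref_length] at hle hsl
      rw [pref_take X hle] at hDD
      refine ⟨s, by omega, (DD_iff R).2 fun i hi => ?_⟩
      rw [pref_length] at hi
      rw [pref_take X hi]
      have := (DD_iff R).1 hDD i (by rw [pref_length]; omega)
      rwa [pref_take X (by omega : i ≤ m')] at this
  · intro h n
    obtain ⟨s, hms, hDD⟩ := h (n + 1)
    set k := max (n + 1) s with hk
    have hgd : gd R (pref X k) (n + 1) = true := by
      refine (gd_iff R).2 ⟨s, hms, ?_, ?_⟩
      · rw [pref_length]; exact le_max_right _ _
      · rwa [pref_take X (le_max_left _ _)]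
    have hle := le_g R (σ := pref X k) (m := n + 1)
      (by rw [pref_length]; exact le_max_left _ _) hgd
    refine ⟨k, List.replicate (g R (pref X k)) false, by rw [hM]; rfl, ?_⟩
    simpa using hle

theorem noPrefix_iff {Q : Set BStr}
    (hmem : ∀ σ, σ ∈ Q ↔ ∃ k, R σ (pref chiK k) = true) (X : CSeq) :
    (∀ m, ∃ s, m ≤ s ∧ DD R s (pref X m) = true) ↔ X ∉ cyl Q := by
  constructor
  · intro h hX
    obtain ⟨σ₀, hσ₀Q, hp⟩ := hX
    obtain ⟨t₀, ht₀⟩ := inQ_eventually R hmem hσ₀Q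
    set m₀ := σ₀.length with hm₀
    obtain ⟨s, hms, hDD⟩ := h (max m₀ t₀)
    have h1 : QA R s (pref X m₀) = false := by
      have := (DD_iff R).1 hDD m₀ (by rw [pref_length]; exact le_max_left _ _)
      rwa [pref_take X (le_max_left _ _)] at this
    have h2 : QAp R s σ₀ := ht₀ s (le_trans (le_max_right _ _) hms)
    rw [← hp] at h2
    rw [(QA_iff R).2 h2] at h1
    exact absurd h1 (by simp)
  · intro hX m
    obtain ⟨s, hs₀, hts⟩ := true_stages m
    refine ⟨s, hs₀, (DD_iff R).2 fun i hi => ?_⟩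
    rw [pref_length] at hi
    rw [pref_take X hi]
    by_contra hne
    have htrue : QA R s (pref X i) = true := by
      cases hq : QA R s (pref X i)
      · exact absurd hq hne
      · rfl
    have : pref X i ∈ Q := trueStage_sound R hmem hts ((QA_iff R).1 htrue)
    exact hX ⟨pref X i, this, by rw [pref_length]⟩

theorem evalSeq_false (M : MonotoneMachine) (hM : M.eval = evalM R) (X : CSeq) :
    evalSeq M X = fun _ => false := by
  funext n
  unfold evalSeq
  split
  · next h =>
    have hspec := h.choose_spec.choose_spec
    have heq : h.choose_spec.choose = List.replicate (g R (pref X h.choose)) false := by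
      have h2 : (some h.choose_spec.choose : Option BStr) = evalM R (pref X h.choose) := by
        rw [← hspec.1]
        exact congrFun hM (pref X h.choose)
      have h3 := h2.symm
      simp only [evalM, Option.some_inj] at h3
      exact h3.symm
    rw [heq]
    rcases Nat.lt_or_ge n (g R (pref X h.choose)) with hlt | hge
    · rw [List.getD_eq_getElem _ _ (by simpa using hlt)]
      simp
    · rw [List.getD_eq_default _ _ (by simpa using hge)]
  · rfl

end Stmt8

/-- for a Σ⁰₂ prefix-free set `Q` there is a monotone machine `M`
such that for every `X`: `M(X)` total ↔ `M(X)` total and equal to `0^ω` ↔ `X`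
has no prefix in `Q`. -/
theorem stmt8 (Q : Set BStr) (hQ : SigmaTwo Q) (hpf : PrefixFree Q) :
    ∃ M : MonotoneMachine, ∀ X : CSeq,
      (TotalOn M X ↔ TotalOn M X ∧ evalSeq M X = fun _ => false) ∧
      (TotalOn M X ↔ X ∉ cyl Q) := by
  obtain ⟨R, hR, hmem⟩ := hQ
  let M : MonotoneMachine :=
    ⟨Stmt8.evalM R, Stmt8.evalM_computable R hR, Stmt8.evalM_mono R⟩
  have hM : M.eval = Stmt8.evalM R := rfl
  exact ⟨M, fun X =>
    ⟨⟨fun h => ⟨h, Stmt8.evalSeq_false R M hM X⟩, fun h => h.1⟩,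
      (Stmt8.totalOn_iff R M hM X).trans (Stmt8.noPrefix_iff R hmem X)⟩⟩
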